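/- arXiv:1504.02250 — 5 statements merged into one kernel-verified Lean document; each statement's English description precedes it below -/
import Mathlib

section
/- Let G be a bipartite graph and let I be a maximum independent set in G with an accessibility ordering σ: x_1,...,x_k. Then the set M^σ = { y·p(y) : y ∈ N(I) }, where p(y) = x_i with i minimal such that y ∈ N(x_i), is a maximum matching in G. -/
/-!
The complement of the independent set `I` is a vertex cover, so no matching has more than
`|V ∖ I|` edges. As `I` is a maximum independent set, every `y ∉ I` has a neighbour in `I`, hence
a first one `p(y)` along `σ`; the edges `y·p(y)` are distinct because `y ∉ I ∋ p(y)`, so `Mσ`,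
a matching by accessibility, has at least `|V ∖ I|` edges.
-/

variable {V : Type*}

/-- `M` is a matching in `G`: a set of edges of `G` that are pairwise disjoint. -/
def IsMatchingSet (G : SimpleGraph V) (M : Set (Sym2 V)) : Prop :=
  M ⊆ G.edgeSet ∧ ∀ e ∈ M, ∀ f ∈ M, e ≠ f → ∀ v : V, v ∈ e → v ∉ f

/-- `V(M)`: the set of vertices covered by the matching `M`. -/
def matVerts (M : Set (Sym2 V)) : Set V := {v | ∃ e ∈ M, v ∈ e}

/-- `M` is a maximum matching in `G`. -/
def IsMaximumMatching (G : SimpleGraph V) (M : Set (Sym2 V)) : Prop :=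
  IsMatchingSet G M ∧ ∀ M', IsMatchingSet G M' → M'.ncard ≤ M.ncard

/-- `M` is uniquely restricted: no matching distinct from `M` covers the same vertices. -/
def UniquelyRestricted (G : SimpleGraph V) (M : Set (Sym2 V)) : Prop :=
  ∀ M', IsMatchingSet G M' → matVerts M' = matVerts M → M' = M

/-- `M` is a perfect matching of `G`. -/
def IsPerfectMatchingSet (G : SimpleGraph V) (M : Set (Sym2 V)) : Prop :=
  IsMatchingSet G M ∧ matVerts M = Set.univ

/-- `A, B` form a bipartition of `G`. -/
def IsBipartition (G : SimpleGraph V) (A B : Set V) : Prop :=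
  Disjoint A B ∧ A ∪ B = Set.univ ∧
    ∀ ⦃u v : V⦄, G.Adj u v → (u ∈ A ∧ v ∈ B) ∨ (u ∈ B ∧ v ∈ A)

/-- `I` is an independent set in `G`. -/
def IsIndepSet (G : SimpleGraph V) (I : Set V) : Prop :=
  ∀ u ∈ I, ∀ v ∈ I, ¬ G.Adj u v

/-- `I` is a maximum independent set in `G`. -/
def IsMaximumIndepSet (G : SimpleGraph V) (I : Set V) : Prop :=
  IsIndepSet G I ∧ ∀ J, IsIndepSet G J → J.ncard ≤ I.ncard

/-- The arcs of the digraph `D(M)`: edges not in `M` oriented from `A` to `B`,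
edges of `M` oriented from `B` to `A`. -/
def DMarc (G : SimpleGraph V) (A B : Set V) (M : Set (Sym2 V)) (u v : V) : Prop :=
  G.Adj u v ∧ ((u ∈ A ∧ v ∈ B ∧ s(u, v) ∉ M) ∨ (u ∈ B ∧ v ∈ A ∧ s(u, v) ∈ M))

/-- The digraph `D(M)` is acyclic. -/
def DMAcyclic (G : SimpleGraph V) (A B : Set V) (M : Set (Sym2 V)) : Prop :=
  ∀ v : V, ¬ Relation.TransGen (DMarc G A B M) v v

/-- `V⁺(M)`: vertices reachable in `D(M)` from an `A`-vertex uncovered by `M`. -/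
def Vplus (G : SimpleGraph V) (A B : Set V) (M : Set (Sym2 V)) : Set V :=
  {v | ∃ a ∈ A, a ∉ matVerts M ∧ Relation.ReflTransGen (DMarc G A B M) a v}

/-- `V⁻(M)`: vertices from which a `B`-vertex uncovered by `M` is reachable in `D(M)`. -/
def Vminus (G : SimpleGraph V) (A B : Set V) (M : Set (Sym2 V)) : Set V :=
  {v | ∃ b ∈ B, b ∉ matVerts M ∧ Relation.ReflTransGen (DMarc G A B M) v b}

/-- Given a linear ordering `l` of an independent set, `Mσ G l` is the set of edges
`y·p(y)` where `p(y)` is the first vertex of `l` adjacent to `y`. -/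
def Msigma (G : SimpleGraph V) (l : List V) : Set (Sym2 V) :=
  {e | ∃ (i : Fin l.length) (y : V), e = s(y, l.get i) ∧ G.Adj (l.get i) y ∧
      ∀ j : Fin l.length, (j : ℕ) < (i : ℕ) → ¬ G.Adj (l.get j) y}

/-- `l` is an accessibility ordering of `I`: it enumerates `I` without repetition
and `Mσ` is a matching. -/
def IsAccessibilityOrdering (G : SimpleGraph V) (I : Set V) (l : List V) : Prop :=
  l.Nodup ∧ {v | v ∈ l} = I ∧ IsMatchingSet G (Msigma G l)

/-- A partial accessibility ordering: an accessibility ordering of a subset of `I`. -/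
def IsPartialAccessibilityOrdering (G : SimpleGraph V) (I : Set V) (l : List V) : Prop :=
  l.Nodup ∧ {v | v ∈ l} ⊆ I ∧ IsMatchingSet G (Msigma G l)

/-- `c` is an `M`-alternating cycle: of every two adjacent edges exactly one is in `M`. -/
def IsAlternatingCycle (G : SimpleGraph V) (M : Set (Sym2 V)) {v : V} (c : G.Walk v v) : Prop :=
  c.IsCycle ∧ (c.edges ++ c.edges.take 1).Chain' (fun e f => e ∈ M ↔ f ∉ M)

/-- `M'` arises from `M` by a single edge exchange. -/
def EdgeExchange (G : SimpleGraph V) (A B : Set V) (M M' : Set (Sym2 V)) : Prop :=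
  (∃ a a' b' : V, a ∈ A ∧ a ∉ matVerts M ∧ s(a', b') ∈ M ∧ G.Adj a b' ∧
      M' = (M \ {s(a', b')}) ∪ {s(a, b')}) ∨
  (∃ b a' b' : V, b ∈ B ∧ b ∉ matVerts M ∧ s(a', b') ∈ M ∧ G.Adj a' b ∧
      M' = (M \ {s(a', b')}) ∪ {s(a', b)})

variable {G : SimpleGraph V}

theorem IsIndepSet.isVertexCover_compl {I : Set V} (hI : IsIndepSet G I) :
    G.IsVertexCover Iᶜ := by
  intro u v huv
  by_contra! h
  simp only [Set.mem_compl_iff, not_not] at h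
  exact hI u h.1 v h.2 huv

theorem IsMaximumIndepSet.exists_adj_of_notMem [Finite V] {I : Set V}
    (hI : IsMaximumIndepSet G I) {v : V} (hv : v ∉ I) : ∃ u ∈ I, G.Adj u v := by
  by_contra! hnadj
  have hindep : IsIndepSet G (insert v I) := by
    rintro a (rfl | ha) b (rfl | hb) hab
    · exact G.irrefl hab
    · exact hnadj b hb hab.symm
    · exact hnadj a ha hab
    · exact hI.1 a ha b hb hab
  have hle := hI.2 _ hindep
  rw [Set.ncard_insert_of_notMem hv] at hle
  omega

theorem IsMatchingSet.ncard_le_ncard_of_isVertexCover [Finite V] {M : Set (Sym2 V)}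
    (hM : IsMatchingSet G M) {C : Set V} (hC : G.IsVertexCover C) : M.ncard ≤ C.ncard := by
  obtain rfl | ⟨e₀, -⟩ := M.eq_empty_or_nonempty
  · simp
  have : Nonempty V := e₀.inductionOn fun v _ => ⟨v⟩
  have hmeet : ∀ e ∈ M, ∃ v ∈ e, v ∈ C := by
    intro e he
    induction e with
    | h u v =>
      rcases hC (hM.1 he) with hu | hv
      · exact ⟨u, Sym2.mem_mk_left u v, hu⟩
      · exact ⟨v, Sym2.mem_mk_right u v, hv⟩
  choose! f hfe hfC using hmeet
  refine Set.ncard_le_ncard_of_injOn f hfC (fun e he e' he' hff => ?_)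
  by_contra hne
  exact hM.2 e he e' he' hne (f e) (hfe e he) (hff ▸ hfe e' he')

theorem exists_mk_mem_Msigma_of_adj {l : List V} {x y : V} (hx : x ∈ l) (hxy : G.Adj x y) :
    ∃ x' ∈ l, s(y, x') ∈ Msigma G l := by
  classical
  obtain ⟨k, rfl⟩ := List.mem_iff_get.mp hx
  have hex : ∃ n, ∃ h : n < l.length, G.Adj (l.get ⟨n, h⟩) y := ⟨k, k.2, hxy⟩
  obtain ⟨hn, hadj⟩ := Nat.find_spec hex
  exact ⟨_, List.get_mem l _, ⟨_, hn⟩, y, rfl, hadj,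
    fun j hj hadjj => Nat.find_min hex hj ⟨j.2, hadjj⟩⟩

theorem ncard_compl_le_ncard_Msigma [Finite V] {I : Set V}
    (hdom : ∀ v ∉ I, ∃ u ∈ I, G.Adj u v) {l : List V} (hl : {v | v ∈ l} = I) :
    Iᶜ.ncard ≤ (Msigma G l).ncard := by
  have hfirst : ∀ y ∈ Iᶜ, ∃ x ∈ I, s(y, x) ∈ Msigma G l := by
    intro y hy
    obtain ⟨u, hu, huy⟩ := hdom y hy
    rw [← hl] at hu ⊢
    exact exists_mk_mem_Msigma_of_adj hu huy
  choose! p hpI hpM using hfirst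
  refine Set.ncard_le_ncard_of_injOn (fun y => s(y, p y)) hpM (fun y hy y' hy' hyy' => ?_)
  rcases Sym2.eq_iff.mp hyy' with ⟨rfl, -⟩ | ⟨rfl, -⟩
  · rfl
  · exact absurd (hpI y' hy') hy

theorem stmt2_general [Fintype V] (G : SimpleGraph V)
    (I : Set V) (hI : IsMaximumIndepSet G I)
    (l : List V) (hl : IsAccessibilityOrdering G I l) :
    IsMaximumMatching G (Msigma G l) := by
  refine ⟨hl.2.2, fun M hM => ?_⟩
  calc M.ncard ≤ Iᶜ.ncard :=
        hM.ncard_le_ncard_of_isVertexCover hI.1.isVertexCover_compl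
    _ ≤ (Msigma G l).ncard :=
        ncard_compl_le_ncard_Msigma (fun _ hv => hI.exists_adj_of_notMem hv) hl.2.1

/-- If `I` is a maximum independent set with accessibility ordering `l`, then `Mσ`
is a maximum matching. -/
theorem stmt2 [Fintype V] (G : SimpleGraph V) (A B : Set V) (hbip : IsBipartition G A B)
    (I : Set V) (hI : IsMaximumIndepSet G I)
    (l : List V) (hl : IsAccessibilityOrdering G I l) :
    IsMaximumMatching G (Msigma G l) :=
  stmt2_general G I hI l hl
end

section
/- Let G be a bipartite graph and E a set of edges of G. If G has a uniquely restricted maximum matching M with M ⊆ E, then every maximum independent set I in G admits an E-good accessibility ordering, i.e., an accessibility ordering σ of I with M^σ ⊆ E. -/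
/-!
By König's theorem, a maximum matching `M` and a maximum independent set `I` of a bipartite
graph satisfy `|M| + |I| = |V|` (the independent set `A ∩ V⁺(M) ∪ B \ V⁺(M)` is large
because a maximum matching has no augmenting path). Hence every vertex outside `I` is matched
by `M` to a vertex of `I`. Order `I` so that `z` precedes `x` whenever the partner of `z` is
adjacent to `x`. Such an order exists: otherwise some nonempty set of vertices of `I` is
permuted by a map `τ` with the partner of `τ x` adjacent to `x`, and switching `M` along the
resulting alternating cycles gives another matching covering the same vertices. In this order
the first neighbour in `I` of every vertex is its `M`-partner, so `M^σ ⊆ M ⊆ E`.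
-/

variable {V : Type*}

namespace IsMatchingSet

variable {G : SimpleGraph V} {M : Set (Sym2 V)}

theorem adj (hM : IsMatchingSet G M) {u v : V} (h : s(u, v) ∈ M) : G.Adj u v :=
  G.mem_edgeSet.mp (hM.1 h)

theorem eq_of_mem (hM : IsMatchingSet G M) {e f : Sym2 V} (he : e ∈ M) (hf : f ∈ M) {v : V}
    (hve : v ∈ e) (hvf : v ∈ f) : e = f := by
  by_contra hne
  exact hM.2 e he f hf hne v hve hvf

theorem mono (hM : IsMatchingSet G M) {M' : Set (Sym2 V)} (h : M' ⊆ M) : IsMatchingSet G M' :=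
  ⟨h.trans hM.1, fun e he f hf => hM.2 e (h he) f (h hf)⟩

protected theorem insert (hM : IsMatchingSet G M) {a b : V} (hab : G.Adj a b)
    (ha : a ∉ matVerts M) (hb : b ∉ matVerts M) : IsMatchingSet G (insert s(a, b) M) := by
  refine ⟨Set.insert_subset (G.mem_edgeSet.mpr hab) hM.1, ?_⟩
  have hfresh : ∀ f ∈ M, ∀ v ∈ s(a, b), v ∉ f := by
    rintro f hf v hv hvf
    rcases Sym2.mem_iff.mp hv with rfl | rfl
    exacts [ha ⟨f, hf, hvf⟩, hb ⟨f, hf, hvf⟩]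
  rintro e (rfl | he) f (rfl | hf) hne v hve hvf
  · exact hne rfl
  · exact hfresh f hf v hve hvf
  · exact hfresh e he v hvf hve
  · exact hM.2 e he f hf hne v hve hvf

end IsMatchingSet

theorem mem_matVerts_left {M : Set (Sym2 V)} {u v : V} (h : s(u, v) ∈ M) : u ∈ matVerts M :=
  ⟨_, h, Sym2.mem_mk_left u v⟩

theorem mem_matVerts_right {M : Set (Sym2 V)} {u v : V} (h : s(u, v) ∈ M) : v ∈ matVerts M :=
  ⟨_, h, Sym2.mem_mk_right u v⟩

open Classical in
noncomputable def partner (M : Set (Sym2 V)) (v : V) : V :=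
  if h : ∃ w, s(v, w) ∈ M then h.choose else v

section Partner

variable {G : SimpleGraph V} {M : Set (Sym2 V)}

theorem partner_mem {v : V} (hv : v ∈ matVerts M) : s(v, partner M v) ∈ M := by
  have h : ∃ w, s(v, w) ∈ M := by
    obtain ⟨e, he, hve⟩ := hv
    obtain ⟨w, rfl⟩ := Sym2.mem_iff_exists.mp hve
    exact ⟨w, he⟩
  rw [partner, dif_pos h]
  exact h.choose_spec

theorem IsMatchingSet.partner_eq (hM : IsMatchingSet G M) {v w : V} (h : s(v, w) ∈ M) :
    partner M v = w :=
  Sym2.congr_right.mp <| hM.eq_of_mem (partner_mem (mem_matVerts_left h)) h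
    (Sym2.mem_mk_left _ _) (Sym2.mem_mk_left _ _)

theorem IsMatchingSet.partner_partner (hM : IsMatchingSet G M) {v : V} (hv : v ∈ matVerts M) :
    partner M (partner M v) = v :=
  hM.partner_eq (Sym2.eq_swap ▸ partner_mem hv)

end Partner

theorem List.exists_nodup_isChain_cons_of_relationReflTransGen {α : Type*} {r : α → α → Prop}
    {a b : α} (h : Relation.ReflTransGen r a b) :
    ∃ l : List α, (a :: l).IsChain r ∧ (a :: l).getLast (List.cons_ne_nil a l) = b ∧
      (a :: l).Nodup := by
  induction h using Relation.ReflTransGen.head_induction_on with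
  | refl => exact ⟨[], .singleton b, rfl, List.nodup_singleton b⟩
  | @head x c hxc _ ih =>
    obtain ⟨l, hch, hlast, hnd⟩ := ih
    by_cases hx : x ∈ c :: l
    · obtain ⟨s, t, hst⟩ := List.append_of_mem hx
      have hsuf : x :: t <:+ c :: l := ⟨s, hst.symm⟩
      exact ⟨t, hch.suffix hsuf, (hsuf.getLast (List.cons_ne_nil x t)).trans hlast,
        hnd.sublist hsuf.sublist⟩
    · exact ⟨c :: l, .cons_cons hxc hch, by rwa [List.getLast_cons_cons],
        List.nodup_cons.mpr ⟨hx, hnd⟩⟩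

section Augmenting

variable {G : SimpleGraph V} {A B : Set V} {M : Set (Sym2 V)}

theorem IsBipartition.dMarc_of_mem_left (hbip : IsBipartition G A B) {u v : V}
    (h : DMarc G A B M u v) (hu : u ∈ A) : v ∈ B ∧ s(u, v) ∉ M := by
  rcases h.2 with ⟨-, hv, hnm⟩ | ⟨hu', -, -⟩
  · exact ⟨hv, hnm⟩
  · exact absurd hu' (Set.disjoint_left.mp hbip.1 hu)

theorem IsBipartition.dMarc_of_mem_right (hbip : IsBipartition G A B) {u v : V}
    (h : DMarc G A B M u v) (hu : u ∈ B) : v ∈ A ∧ s(u, v) ∈ M := by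
  rcases h.2 with ⟨hu', -, -⟩ | ⟨-, hv, hm⟩
  · exact absurd hu' (Set.disjoint_right.mp hbip.1 hu)
  · exact ⟨hv, hm⟩

theorem dMarc_congr {M' : Set (Sym2 V)} {u v : V} (h : s(u, v) ∈ M ↔ s(u, v) ∈ M') :
    DMarc G A B M u v ↔ DMarc G A B M' u v := by
  simp only [DMarc, h]

theorem mem_exchange_iff {a a' b : V} {e : Sym2 V} (ha : a ∉ e) (hb : b ∉ e) :
    e ∈ insert s(a, b) (M \ {s(a', b)}) ↔ e ∈ M := by
  have h₁ : e ≠ s(a, b) := fun h => ha (h ▸ Sym2.mem_mk_left a b)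
  have h₂ : e ≠ s(a', b) := fun h => hb (h ▸ Sym2.mem_mk_right a' b)
  simp [h₁, h₂]

theorem matVerts_exchange_subset {a a' b : V} (hb : b ∈ matVerts M) :
    matVerts (insert s(a, b) (M \ {s(a', b)})) ⊆ insert a (matVerts M) := by
  rintro v ⟨e, rfl | ⟨he, -⟩, hv⟩
  · rcases Sym2.mem_iff.mp hv with rfl | rfl
    exacts [Set.mem_insert v _, Set.mem_insert_of_mem _ hb]
  · exact Set.mem_insert_of_mem _ ⟨e, he, hv⟩

theorem notMem_matVerts_exchange (hM : IsMatchingSet G M) {a a' b : V} (ha : a ∉ matVerts M)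
    (hf : s(a', b) ∈ M) : a' ∉ matVerts (insert s(a, b) (M \ {s(a', b)})) := by
  rintro ⟨e, rfl | ⟨he, hne⟩, hv⟩
  · rcases Sym2.mem_iff.mp hv with rfl | rfl
    · exact ha (mem_matVerts_left hf)
    · exact (hM.adj hf).ne rfl
  · exact hne (hM.eq_of_mem he hf hv (Sym2.mem_mk_left a' b))

theorem IsMaximumMatching.exchange [Finite V] (hM : IsMaximumMatching G M) {a a' b : V}
    (ha : a ∉ matVerts M) (hab : G.Adj a b) (hf : s(a', b) ∈ M) :
    IsMaximumMatching G (insert s(a, b) (M \ {s(a', b)})) := by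
  have hb : b ∉ matVerts (M \ {s(a', b)}) := fun ⟨e, he, hbe⟩ =>
    he.2 (hM.1.eq_of_mem he.1 hf hbe (Sym2.mem_mk_right a' b))
  have hcard : (insert s(a, b) (M \ {s(a', b)})).ncard = M.ncard :=
    Set.ncard_exchange (fun h => ha (mem_matVerts_left h)) hf
  have ha' : a ∉ matVerts (M \ {s(a', b)}) := fun ⟨e, he, hae⟩ => ha ⟨e, he.1, hae⟩
  exact ⟨(hM.1.mono Set.sdiff_subset).insert hab ha' hb, fun M' hM' => hcard ▸ hM.2 M' hM'⟩

/-- Exchanging the first two edges of the path moves the uncovered start two steps along it. -/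
theorem IsBipartition.getLast_mem_matVerts [Finite V] (hbip : IsBipartition G A B) :
    ∀ {M : Set (Sym2 V)} {a : V} {l : List V}, IsMaximumMatching G M → a ∈ A →
      a ∉ matVerts M → (a :: l).IsChain (DMarc G A B M) → (a :: l).Nodup →
      (a :: l).getLast (List.cons_ne_nil a l) ∈ B →
      (a :: l).getLast (List.cons_ne_nil a l) ∈ matVerts M
  | _, _, [], _, hA, _, _, _, hB => absurd hB (Set.disjoint_left.mp hbip.1 hA)
  | M, a, [b], hM, _, ha, hch, _, _ => by
    by_contra hb
    have hmax := hM.2 _ (hM.1.insert (List.isChain_pair.mp hch).1 ha hb)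
    rw [Set.ncard_insert_of_notMem (fun h => ha (mem_matVerts_left h))] at hmax
    omega
  | M, a, b :: a' :: l, hM, hA, ha, hch, hnd, hB => by
    obtain ⟨hab, hba', hch⟩ :=
      (List.isChain_cons_cons.mp hch).imp_right List.isChain_cons_cons.mp
    have hbB := (hbip.dMarc_of_mem_left hab hA).1
    obtain ⟨hA', hf⟩ := hbip.dMarc_of_mem_right hba' hbB
    rw [Sym2.eq_swap] at hf
    rw [List.nodup_cons, List.nodup_cons] at hnd
    obtain ⟨hal, hbl, hnd⟩ := hnd
    have hfar : ∀ {x}, x ∈ a' :: l → a ≠ x ∧ b ≠ x := fun hx =>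
      ⟨fun h => hal (List.mem_cons_of_mem _ (h ▸ hx)), fun h => hbl (h ▸ hx)⟩
    have hch₁ : (a' :: l).IsChain (DMarc G A B (insert s(a, b) (M \ {s(a', b)}))) :=
      hch.imp_of_mem_imp fun u v hu hv huv => (dMarc_congr (mem_exchange_iff
        (by simp [(hfar hu).1, (hfar hv).1]) (by simp [(hfar hu).2, (hfar hv).2]))).mpr huv
    have hlast := getLast_mem_matVerts hbip (hM.exchange ha hab.1 hf) hA'
      (notMem_matVerts_exchange hM.1 ha hf) hch₁ hnd (by simpa using hB)
    simpa [(hfar (List.getLast_mem _)).1.symm] using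
      matVerts_exchange_subset (mem_matVerts_right hf) hlast

end Augmenting

section Konig

variable {G : SimpleGraph V} {A B : Set V} {M : Set (Sym2 V)}

theorem mem_Vplus_of_notMem_matVerts {a : V} (hA : a ∈ A) (ha : a ∉ matVerts M) :
    a ∈ Vplus G A B M :=
  ⟨a, hA, ha, .refl⟩

theorem mem_Vplus_of_dMarc {v w : V} (hv : v ∈ Vplus G A B M) (h : DMarc G A B M v w) :
    w ∈ Vplus G A B M :=
  let ⟨a, hA, ha, hav⟩ := hv
  ⟨a, hA, ha, hav.tail h⟩

theorem IsMaximumMatching.mem_matVerts_of_mem_Vplus [Finite V] (hbip : IsBipartition G A B)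
    (hM : IsMaximumMatching G M) {b : V} (hB : b ∈ B) (hb : b ∈ Vplus G A B M) :
    b ∈ matVerts M := by
  obtain ⟨a, hA, ha, hab⟩ := hb
  obtain ⟨l, hch, rfl, hnd⟩ := List.exists_nodup_isChain_cons_of_relationReflTransGen hab
  exact hbip.getLast_mem_matVerts hM hA ha hch hnd hB

theorem IsBipartition.mem_Vplus_of_adj (hbip : IsBipartition G A B) (hM : IsMatchingSet G M)
    {p q : V} (hA : p ∈ A) (hp : p ∈ Vplus G A B M) (hpq : G.Adj p q) :
    q ∈ Vplus G A B M := by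
  have hB : q ∈ B :=
    ((hbip.2.2 hpq).resolve_right fun h => Set.disjoint_left.mp hbip.1 hA h.1).2
  by_cases hm : s(p, q) ∈ M
  · -- `p` is covered, so it was entered along its matching edge, i.e. from `q`
    obtain ⟨a, haA, ha, hap⟩ := hp
    rcases hap.cases_tail with rfl | ⟨w, haw, hwp⟩
    · exact absurd (mem_matVerts_left hm) ha
    · have hwq : w = q := by
        rcases hwp.2 with ⟨-, hpB, -⟩ | ⟨-, -, hwm⟩
        · exact absurd hpB (Set.disjoint_left.mp hbip.1 hA)
        · rw [Sym2.eq_swap] at hwm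
          rw [← hM.partner_eq hm, ← hM.partner_eq hwm]
      exact ⟨a, haA, ha, hwq ▸ haw⟩
  · exact mem_Vplus_of_dMarc hp ⟨hpq, .inl ⟨hA, hB, hm⟩⟩

theorem IsBipartition.isIndepSet_konig (hbip : IsBipartition G A B) (hM : IsMatchingSet G M) :
    IsIndepSet G (A ∩ Vplus G A B M ∪ B \ Vplus G A B M) := by
  set J := A ∩ Vplus G A B M ∪ B \ Vplus G A B M
  have hJA : ∀ x ∈ J, x ∈ A → x ∈ Vplus G A B M := by
    rintro x (hx | hx) hA
    exacts [hx.2, absurd hx.1 (Set.disjoint_left.mp hbip.1 hA)]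
  have hJB : ∀ x ∈ J, x ∈ B → x ∉ Vplus G A B M := by
    rintro x (hx | hx) hB
    exacts [absurd hx.1 (Set.disjoint_right.mp hbip.1 hB), hx.2]
  rintro u hu v hv huv
  rcases hbip.2.2 huv with ⟨huA, hvB⟩ | ⟨huB, hvA⟩
  · exact hJB v hv hvB (hbip.mem_Vplus_of_adj hM huA (hJA u hu huA) huv)
  · exact hJB u hu huB (hbip.mem_Vplus_of_adj hM hvA (hJA v hv hvA) huv.symm)

theorem ncard_le_ncard_of_subset_matVerts [Finite V] {K : Set V} (hK : K ⊆ matVerts M)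
    (hKM : ∀ u ∈ K, ∀ v ∈ K, s(u, v) ∉ M) : K.ncard ≤ M.ncard := by
  refine Set.ncard_le_ncard_of_injOn (fun v => s(v, partner M v))
    (fun v hv => partner_mem (hK hv)) (fun u hu v hv huv => ?_) (Set.toFinite M)
  by_contra hne
  have huv' : s(u, partner M u) = s(v, partner M v) := huv
  rw [Sym2.eq_iff] at huv'
  rcases huv' with ⟨h, -⟩ | ⟨-, h⟩
  · exact hne h
  · exact hKM u hu v hv (h ▸ partner_mem (hK hu))

theorem IsBipartition.exists_isIndepSet_card_le_add [Finite V] (hbip : IsBipartition G A B)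
    (hM : IsMaximumMatching G M) : ∃ J, IsIndepSet G J ∧ Nat.card V ≤ J.ncard + M.ncard := by
  set Z := Vplus G A B M
  set J := A ∩ Z ∪ B \ Z
  have hK : ∀ v ∈ Jᶜ, (v ∈ A → v ∉ Z) ∧ (v ∈ B → v ∈ Z) := by
    intro v hv
    simp only [J, Set.mem_compl_iff, Set.mem_union, Set.mem_inter_iff, Set.mem_sdiff, not_or,
      not_and, not_not] at hv
    exact hv
  have hcov : Jᶜ ⊆ matVerts M := fun v hv => by
    rcases (hbip.2.1 ▸ Set.mem_univ v : v ∈ A ∪ B) with hA | hB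
    · by_contra h
      exact (hK v hv).1 hA (mem_Vplus_of_notMem_matVerts hA h)
    · exact hM.mem_matVerts_of_mem_Vplus hbip hB ((hK v hv).2 hB)
  have hnoedge : ∀ u ∈ Jᶜ, ∀ v ∈ Jᶜ, s(u, v) ∉ M := by
    intro u hu v hv huv
    have hadj := hM.1.adj huv
    rcases hbip.2.2 hadj with ⟨huA, hvB⟩ | ⟨huB, hvA⟩
    · rw [Sym2.eq_swap] at huv
      exact (hK u hu).1 huA
        (mem_Vplus_of_dMarc ((hK v hv).2 hvB) ⟨hadj.symm, .inr ⟨hvB, huA, huv⟩⟩)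
    · exact (hK v hv).1 hvA
        (mem_Vplus_of_dMarc ((hK u hu).2 huB) ⟨hadj, .inr ⟨huB, hvA, huv⟩⟩)
  have := ncard_le_ncard_of_subset_matVerts hcov hnoedge
  have := Set.ncard_add_ncard_compl J
  exact ⟨J, hbip.isIndepSet_konig hM.1, by omega⟩

end Konig

theorem IsMaximumIndepSet.ncard_compl_le [Finite V] {G : SimpleGraph V} {A B : Set V}
    {M : Set (Sym2 V)} {I : Set V} (hI : IsMaximumIndepSet G I) (hbip : IsBipartition G A B)
    (hM : IsMaximumMatching G M) : Iᶜ.ncard ≤ M.ncard := by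
  obtain ⟨J, hJ, hcard⟩ := hbip.exists_isIndepSet_card_le_add hM
  have := hI.2 J hJ
  have := Set.ncard_add_ncard_compl I
  omega

/-- Choosing an endpoint outside `I` on every edge of `M` injects `M` into `Iᶜ`; when this
is onto, no edge of `M` has both ends outside `I`. -/
theorem IsMatchingSet.exists_mem_of_ncard_compl_le [Finite V] {G : SimpleGraph V}
    {M : Set (Sym2 V)} {I : Set V} (hM : IsMatchingSet G M) (hI : IsIndepSet G I)
    (hcard : Iᶜ.ncard ≤ M.ncard) {y : V} (hy : y ∉ I) : ∃ x ∈ I, s(y, x) ∈ M := by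
  have hout : ∀ e ∈ M, ∃ v ∈ e, v ∉ I := by
    intro e he
    induction e using Sym2.ind with
    | _ u v =>
      by_cases hu : u ∈ I
      · exact ⟨v, Sym2.mem_mk_right u v, fun hv => hI u hu v hv (hM.adj he)⟩
      · exact ⟨u, Sym2.mem_mk_left u v, hu⟩
  have : Nonempty V := ⟨y⟩
  choose! f hf using hout
  have hinj : Set.InjOn f M := fun e he e' he' h =>
    hM.eq_of_mem he he' (hf e he).1 (h ▸ (hf e' he').1)
  have himage : f '' M = Iᶜ :=
    Set.eq_of_subset_of_ncard_le (Set.image_subset_iff.mpr fun e he => (hf e he).2)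
      (by rwa [hinj.ncard_image])
  obtain ⟨e, he, rfl⟩ : y ∈ f '' M := himage ▸ hy
  have hxe := partner_mem ⟨e, he, (hf e he).1⟩
  refine ⟨partner M (f e), by_contra fun hx => ?_, hxe⟩
  obtain ⟨e', he', hfe'⟩ : partner M (f e) ∈ f '' M := himage ▸ hx
  have hee' : e = e' := (hM.eq_of_mem he hxe (hf e he).1 (Sym2.mem_mk_left _ _)).trans
    (hM.eq_of_mem hxe he' (Sym2.mem_mk_right _ _) (hfe' ▸ (hf e' he').1))
  rw [← hee'] at hfe'
  exact (hM.adj hxe).ne hfe'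

section Rotation

variable {G : SimpleGraph V} {M : Set (Sym2 V)} {C : Set V} {τ : V → V}

/-- `M` switched along the alternating cycles `x, partner (τ x), τ x, partner (τ² x), …`. -/
def rotate (M : Set (Sym2 V)) (C : Set V) (τ : V → V) : Set (Sym2 V) :=
  (M \ (fun y => s(y, partner M y)) '' C) ∪ (fun x => s(x, partner M (τ x))) '' C

variable (hM : IsMatchingSet G M) (hC : C ⊆ matVerts M)
  (hCp : ∀ x ∈ C, ∀ y ∈ C, x ≠ partner M y) (hτ : Set.BijOn τ C C)
include hM hC hCp hτ

theorem eq_of_mem_rotate_edge {x x' v : V} (hx : x ∈ C) (hx' : x' ∈ C)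
    (hv : v ∈ s(x, partner M (τ x))) (hv' : v ∈ s(x', partner M (τ x'))) : x = x' := by
  rcases Sym2.mem_iff.mp hv with rfl | rfl <;> rcases Sym2.mem_iff.mp hv' with h | h
  · exact h
  · exact absurd h (hCp v hx _ (hτ.mapsTo hx'))
  · exact absurd h.symm (hCp x' hx' _ (hτ.mapsTo hx))
  · refine hτ.injOn hx hx' ?_
    rw [← hM.partner_partner (hC (hτ.mapsTo hx)), ← hM.partner_partner (hC (hτ.mapsTo hx')),
      h]

omit hCp in
theorem mem_image_of_mem_rotate_edge {e : Sym2 V} (he : e ∈ M) {x v : V} (hx : x ∈ C)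
    (hve : v ∈ e) (hv : v ∈ s(x, partner M (τ x))) :
    e ∈ (fun y => s(y, partner M y)) '' C := by
  rcases Sym2.mem_iff.mp hv with rfl | rfl
  · exact ⟨v, hx, (hM.eq_of_mem he (partner_mem (hC hx)) hve (Sym2.mem_mk_left _ _)).symm⟩
  · exact ⟨τ x, hτ.mapsTo hx,
      (hM.eq_of_mem he (partner_mem (hC (hτ.mapsTo hx))) hve (Sym2.mem_mk_right _ _)).symm⟩

theorem isMatchingSet_rotate (hadj : ∀ x ∈ C, G.Adj x (partner M (τ x))) :
    IsMatchingSet G (rotate M C τ) := by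
  refine ⟨?_, ?_⟩
  · rintro e (⟨he, -⟩ | ⟨x, hx, rfl⟩)
    exacts [hM.1 he, G.mem_edgeSet.mpr (hadj x hx)]
  · rintro e (⟨he, heF⟩ | ⟨x, hx, rfl⟩) f (⟨hf, hfF⟩ | ⟨y, hy, rfl⟩) hne v hve hvf
    · exact hM.2 e he f hf hne v hve hvf
    · exact heF (mem_image_of_mem_rotate_edge hM hC hτ he hy hve hvf)
    · exact hfF (mem_image_of_mem_rotate_edge hM hC hτ hf hx hvf hve)
    · exact hne (by rw [eq_of_mem_rotate_edge hM hC hCp hτ hx hy hve hvf])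

omit hM hCp in
theorem matVerts_rotate : matVerts (rotate M C τ) = matVerts M := by
  ext v
  constructor
  · rintro ⟨e, ⟨he, -⟩ | ⟨x, hx, rfl⟩, hv⟩
    · exact ⟨e, he, hv⟩
    · rcases Sym2.mem_iff.mp hv with rfl | rfl
      exacts [hC hx, mem_matVerts_right (partner_mem (hC (hτ.mapsTo hx)))]
  · rintro ⟨e, he, hv⟩
    by_cases heF : e ∈ (fun y => s(y, partner M y)) '' C
    · obtain ⟨y, hy, rfl⟩ := heF
      rcases Sym2.mem_iff.mp hv with rfl | rfl
      · exact ⟨_, .inr ⟨v, hy, rfl⟩, Sym2.mem_mk_left _ _⟩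
      · obtain ⟨x, hx, rfl⟩ := hτ.surjOn hy
        exact ⟨_, .inr ⟨x, hx, rfl⟩, Sym2.mem_mk_right _ _⟩
    · exact ⟨e, .inl ⟨he, heF⟩, hv⟩

omit hCp in
theorem rotate_ne (hne : C.Nonempty) (hmove : ∀ x ∈ C, τ x ≠ x) : rotate M C τ ≠ M := by
  obtain ⟨x, hx⟩ := hne
  intro h
  have hmem : s(x, partner M (τ x)) ∈ rotate M C τ := Or.inr ⟨x, hx, rfl⟩
  rw [h] at hmem
  exact hmove x hx (Sym2.congr_left.mp (hM.eq_of_mem (partner_mem (hC (hτ.mapsTo hx))) hmem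
    (Sym2.mem_mk_right _ _) (Sym2.mem_mk_right _ _)))

theorem UniquelyRestricted.eq_empty_of_bijOn (hur : UniquelyRestricted G M)
    (hstep : ∀ x ∈ C, τ x ≠ x ∧ G.Adj x (partner M (τ x))) : C = ∅ := by
  by_contra hne
  exact rotate_ne hM hC hτ (Set.nonempty_iff_ne_empty.mpr hne) (fun x hx => (hstep x hx).1)
    (hur _ (isMatchingSet_rotate hM hC hCp hτ fun x hx => (hstep x hx).2)
      (matVerts_rotate hC hτ))

end Rotation

theorem Finset.exists_bijOn_of_forall_exists_rel {α : Type*} (r : α → α → Prop)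
    (X : Finset α) (hX : X.Nonempty) (h : ∀ x ∈ X, ∃ y ∈ X, r y x) :
    ∃ C ⊆ X, C.Nonempty ∧ ∃ τ, Set.BijOn τ C C ∧ ∀ x ∈ C, r (τ x) x := by
  classical
  induction X using Finset.strongInduction with
  | H X ih =>
    have : Nonempty α := ⟨hX.choose⟩
    choose! τ hτX hτr using h
    by_cases hsurj : X.image τ = X
    · refine ⟨X, subset_rfl, hX, τ, ?_, hτr⟩
      refine (X.finite_toSet.surjOn_iff_bijOn_of_mapsTo hτX).mp fun y hy => ?_
      rw [← hsurj] at hy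
      simpa using hy
    · have hsub : X.image τ ⊂ X := ssubset_of_subset_of_ne (image_subset_iff.mpr hτX) hsurj
      obtain ⟨C, hC, hrest⟩ := ih _ hsub (hX.image τ) fun x hx =>
        ⟨τ x, mem_image_of_mem τ (hsub.subset hx), hτr x (hsub.subset hx)⟩
      exact ⟨C, hC.trans hsub.subset, hrest⟩

theorem Finset.exists_nodup_pairwise_of_exists_source {α : Type*} (r : α → α → Prop)
    (s : Finset α) (h : ∀ X ⊆ s, X.Nonempty → ∃ x ∈ X, ∀ z ∈ X, ¬ r z x) :
    ∃ l : List α, l.Nodup ∧ (∀ v, v ∈ l ↔ v ∈ s) ∧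
      l.Pairwise fun x z => ¬ r z x := by
  classical
  induction s using Finset.strongInduction with
  | H s ih =>
    rcases s.eq_empty_or_nonempty with rfl | hne
    · exact ⟨[], List.nodup_nil, by simp, List.Pairwise.nil⟩
    obtain ⟨x, hx, hsrc⟩ := h s subset_rfl hne
    obtain ⟨l, hnd, hmem, hpw⟩ :=
      ih (s.erase x) (erase_ssubset hx) fun X hX => h X (hX.trans (erase_subset x s))
    have hxl : x ∉ l := fun h => by simpa using (hmem x).mp h
    have hxfirst : ∀ z ∈ l, ¬ r z x := fun z hz => hsrc z (mem_of_mem_erase ((hmem z).mp hz))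
    refine ⟨x :: l, List.nodup_cons.mpr ⟨hxl, hnd⟩, fun v => ?_,
      List.pairwise_cons.mpr ⟨hxfirst, hpw⟩⟩
    rw [List.mem_cons, hmem, mem_erase]
    constructor
    · rintro (rfl | ⟨-, hv⟩)
      exacts [hx, hv]
    · intro hv
      by_cases hvx : v = x
      exacts [.inl hvx, .inr ⟨hvx, hv⟩]

/-- In an ordering with `M^σ ⊆ M`, `z` has to precede `x`. -/
def PartnerAdj (G : SimpleGraph V) (M : Set (Sym2 V)) (z x : V) : Prop :=
  z ≠ x ∧ ∃ y, s(z, y) ∈ M ∧ G.Adj y x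

theorem UniquelyRestricted.exists_source {G : SimpleGraph V} {M : Set (Sym2 V)} {I : Set V}
    (hur : UniquelyRestricted G M) (hM : IsMatchingSet G M) (hI : IsIndepSet G I)
    (X : Finset V) (hXI : ↑X ⊆ I) (hX : X.Nonempty) :
    ∃ x ∈ X, ∀ z ∈ X, ¬ PartnerAdj G M z x := by
  by_contra! h
  obtain ⟨C, hCX, hCne, τ, hτ, hstep⟩ := X.exists_bijOn_of_forall_exists_rel _ hX h
  have hcycle : ∀ x ∈ C, τ x ≠ x ∧ G.Adj x (partner M (τ x)) := by
    intro x hx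
    obtain ⟨hne, y, hy, hyx⟩ := hstep x hx
    exact ⟨hne, hM.partner_eq hy ▸ hyx.symm⟩
  have hC : (C : Set V) ⊆ matVerts M := fun c hc => by
    obtain ⟨x, hx, rfl⟩ := hτ.surjOn hc
    obtain ⟨-, y, hy, -⟩ := hstep x hx
    exact mem_matVerts_left hy
  have hCp : ∀ x ∈ (C : Set V), ∀ y ∈ (C : Set V), x ≠ partner M y := by
    rintro x hx y hy rfl
    exact hI y (hXI (hCX hy)) _ (hXI (hCX hx)) (hM.adj (partner_mem (hC hy)))
  have := hur.eq_empty_of_bijOn hM hC hCp hτ hcycle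
  exact hCne.ne_empty (by exact_mod_cast this)

theorem msigma_subset_of_pairwise {G : SimpleGraph V} {M : Set (Sym2 V)} {l : List V}
    (hM : M ⊆ G.edgeSet) (hl : l.Pairwise fun x z => ¬ PartnerAdj G M z x)
    (hcov : ∀ x ∈ l, ∀ y, G.Adj x y → ∃ z ∈ l, s(z, y) ∈ M) : Msigma G l ⊆ M := by
  rintro e ⟨i, y, rfl, hiy, hfirst⟩
  obtain ⟨z, hz, hzy⟩ := hcov _ (l.get_mem i) y hiy
  obtain ⟨j, rfl⟩ := List.get_of_mem hz
  suffices hji : l.get j = l.get i by rwa [hji, Sym2.eq_swap] at hzy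
  rcases lt_trichotomy (j : ℕ) i with hji | hji | hij
  · exact absurd (G.mem_edgeSet.mp (hM hzy)) (hfirst j hji)
  · rw [Fin.ext hji]
  · by_contra hne
    exact List.pairwise_iff_get.mp hl i j hij ⟨hne, y, hzy, hiy.symm⟩

/-- If `G` has a uniquely restricted maximum matching contained in `E`, then every
maximum independent set admits an `E`-good accessibility ordering. -/
theorem stmt4 [Fintype V] (G : SimpleGraph V) (A B : Set V) (hbip : IsBipartition G A B)
    (E : Set (Sym2 V))
    (M : Set (Sym2 V)) (hM : IsMaximumMatching G M) (hur : UniquelyRestricted G M)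
    (hME : M ⊆ E) (I : Set V) (hI : IsMaximumIndepSet G I) :
    ∃ l : List V, IsAccessibilityOrdering G I l ∧ Msigma G l ⊆ E := by
  have hpartner : ∀ y ∉ I, ∃ x ∈ I, s(y, x) ∈ M := fun y hy =>
    hM.1.exists_mem_of_ncard_compl_le hI.1 (hI.ncard_compl_le hbip hM) hy
  obtain ⟨l, hnd, hmem, hpw⟩ := (Set.toFinite I).toFinset.exists_nodup_pairwise_of_exists_source
    (PartnerAdj G M) fun X hX hne =>
      hur.exists_source hM.1 hI.1 X (fun x hx => by simpa using hX hx) hne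
  have hlI : {v | v ∈ l} = I := by
    ext v
    simp [hmem]
  have hsub : Msigma G l ⊆ M := msigma_subset_of_pairwise hM.1.1 hpw fun x hx y hxy => by
    obtain ⟨z, hzI, hyz⟩ := hpartner y fun hyI => hI.1 x (hlI ▸ hx) y hyI hxy
    exact ⟨z, (hmem z).mpr (by simpa using hzI), by rwa [Sym2.eq_swap]⟩
  exact ⟨l, ⟨hnd, hlI, hM.1.mono hsub⟩, hsub.trans hME⟩
end

section
/- Let G be a bipartite graph, E a set of edges of G, and I a maximum independent set of G. If I has an E-good accessibility ordering, then every E-good partial accessibility ordering x'_1,...,x'_{ℓ−1} of a proper subset of I can be extended by one element x'_ℓ ∈ I to an E-good partial accessibility ordering x'_1,...,x'_ℓ. -/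
/-! Let `x` be the first vertex of the `E`-good ordering `σ` of `I` that is not yet in `l'`.
A vertex `y` first reached by `x` in `l' ++ [x]` has no neighbour in `l'`, which contains every
vertex before `x` in `σ`; so `y·x ∈ M^σ ⊆ E`. These new edges form a matching because `M^σ` is
one, and they avoid the edges of `M^{l'}` because `I` is independent and `y` has no neighbour
in `l'`. -/

variable {V : Type*}

def freshEdges (G : SimpleGraph V) (l : List V) (x : V) : Set (Sym2 V) :=
  {e | ∃ y, e = s(y, x) ∧ G.Adj x y ∧ ∀ v ∈ l, ¬ G.Adj v y}

lemma mem_msigma_iff {G : SimpleGraph V} {l : List V} {e : Sym2 V} :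
    e ∈ Msigma G l ↔ ∃ (i : ℕ) (hi : i < l.length) (y : V), e = s(y, l[i]) ∧ G.Adj l[i] y ∧
      ∀ (j : ℕ) (hj : j < i), ¬ G.Adj (l[j]'(hj.trans hi)) y := by
  constructor
  · rintro ⟨⟨i, hi⟩, y, rfl, hadj, hmin⟩
    exact ⟨i, hi, y, rfl, hadj, fun j hj => hmin ⟨j, hj.trans hi⟩ hj⟩
  · rintro ⟨i, hi, y, rfl, hadj, hmin⟩
    exact ⟨⟨i, hi⟩, y, rfl, hadj, fun j hj => hmin j hj⟩

lemma msigma_append_singleton (G : SimpleGraph V) (l : List V) (x : V) :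
    Msigma G (l ++ [x]) = Msigma G l ∪ freshEdges G l x := by
  ext e
  simp only [Set.mem_union, mem_msigma_iff, freshEdges, List.mem_iff_getElem]
  constructor
  · rintro ⟨i, hi, y, rfl, hadj, hmin⟩
    rcases Nat.lt_or_ge i l.length with hil | hil
    · simp only [List.getElem_append_left hil] at hadj ⊢
      exact .inl ⟨i, hil, y, rfl, hadj, fun j hj => by
        simpa [List.getElem_append_left (hj.trans hil)] using hmin j hj⟩
    · obtain rfl : i = l.length := by
        simp only [List.length_append, List.length_singleton] at hi; omega
      simp only [List.getElem_concat_length] at hadj ⊢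
      refine .inr ⟨y, rfl, hadj, ?_⟩
      rintro _ ⟨j, hj, rfl⟩
      simpa [List.getElem_append_left hj] using hmin j hj
  · rintro (⟨i, hi, y, rfl, hadj, hmin⟩ | ⟨y, rfl, hadj, hmin⟩)
    · refine ⟨i, by simpa using Nat.lt_succ_of_lt hi, y, by rw [List.getElem_append_left hi],
        by rwa [List.getElem_append_left hi], fun j hj => ?_⟩
      simpa [List.getElem_append_left (hj.trans hi)] using hmin j hj
    · refine ⟨l.length, by simp, y, by simp, by simpa using hadj, fun j hj => ?_⟩
      simpa [List.getElem_append_left hj] using hmin _ ⟨j, hj, rfl⟩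

lemma freshEdges_subset_msigma {G : SimpleGraph V} {l s : List V} {i : ℕ} (hi : i < l.length)
    (hprefix : ∀ (j : ℕ) (hj : j < i), l[j] ∈ s) : freshEdges G s l[i] ⊆ Msigma G l := by
  rintro _ ⟨y, rfl, hadj, hfresh⟩
  exact mem_msigma_iff.2 ⟨i, hi, y, rfl, hadj, fun j hj => hfresh _ (hprefix j hj)⟩

lemma IsMatchingSet.mono_s6 {G : SimpleGraph V} {M N : Set (Sym2 V)} (hM : IsMatchingSet G M)
    (hNM : N ⊆ M) : IsMatchingSet G N :=
  ⟨hNM.trans hM.1, fun e he f hf => hM.2 e (hNM he) f (hNM hf)⟩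

lemma IsMatchingSet.union {G : SimpleGraph V} {M N : Set (Sym2 V)} (hM : IsMatchingSet G M)
    (hN : IsMatchingSet G N) (hMN : ∀ e ∈ M, ∀ f ∈ N, ∀ v ∈ e, v ∉ f) :
    IsMatchingSet G (M ∪ N) := by
  refine ⟨Set.union_subset hM.1 hN.1, ?_⟩
  rintro e (he | he) f (hf | hf) hne v hve
  · exact hM.2 e he f hf hne v hve
  · exact hMN e he f hf v hve
  · exact fun hvf => hMN f hf e he v hvf hve
  · exact hN.2 e he f hf hne v hve

lemma notMem_of_mem_msigma_of_mem_freshEdges {G : SimpleGraph V} {I : Set V}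
    (hI : IsIndepSet G I) {l : List V} (hlI : ∀ v ∈ l, v ∈ I) {x : V} (hxI : x ∈ I)
    (hxl : x ∉ l) {e f : Sym2 V} (he : e ∈ Msigma G l) (hf : f ∈ freshEdges G l x) :
    ∀ v ∈ e, v ∉ f := by
  obtain ⟨i, hi, y', rfl, hadj', -⟩ := mem_msigma_iff.1 he
  obtain ⟨y, rfl, hadj, hfresh⟩ := hf
  have hli : l[i] ∈ l := List.getElem_mem hi
  intro v hve hvf
  rw [Sym2.mem_iff] at hve hvf
  rcases hve with rfl | rfl <;> rcases hvf with rfl | rfl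
  · exact hfresh _ hli hadj'
  · exact hI _ (hlI _ hli) _ hxI hadj'
  · exact hI _ hxI _ (hlI _ hli) hadj
  · exact hxl hli

lemma List.exists_getElem_and_forall_lt_not {α : Type*} {l : List α} {p : α → Prop}
    (h : ∃ x ∈ l, p x) : ∃ (i : ℕ) (hi : i < l.length), p l[i] ∧
      ∀ (j : ℕ) (hj : j < i), ¬ p (l[j]'(hj.trans hi)) := by
  classical
  have hex : ∃ i, ∃ hi : i < l.length, p l[i] := by
    obtain ⟨x, hx, hpx⟩ := h
    obtain ⟨i, hi, rfl⟩ := List.mem_iff_getElem.1 hx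
    exact ⟨i, hi, hpx⟩
  obtain ⟨hi, hpi⟩ := Nat.find_spec hex
  exact ⟨Nat.find hex, hi, hpi, fun j hj hpj => Nat.find_min hex hj ⟨_, hpj⟩⟩

theorem stmt6_general (G : SimpleGraph V)
    (E : Set (Sym2 V)) (I : Set V) (hI : IsMaximumIndepSet G I)
    (hex : ∃ l, IsAccessibilityOrdering G I l ∧ Msigma G l ⊆ E)
    (l' : List V) (hl' : IsPartialAccessibilityOrdering G I l')
    (hgood : Msigma G l' ⊆ E) (hproper : {v | v ∈ l'} ≠ I) :
    ∃ x ∈ I, x ∉ l' ∧ IsPartialAccessibilityOrdering G I (l' ++ [x]) ∧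
      Msigma G (l' ++ [x]) ⊆ E := by
  obtain ⟨l, ⟨-, rfl, hmatch⟩, hE⟩ := hex
  obtain ⟨hnodup, hsub, hmatch'⟩ := hl'
  obtain ⟨i, hi, hil', hprefix⟩ := List.exists_getElem_and_forall_lt_not (p := (· ∉ l'))
    (Set.exists_of_ssubset (lt_of_le_of_ne hsub hproper))
  have hfresh : freshEdges G l' l[i] ⊆ Msigma G l :=
    freshEdges_subset_msigma hi fun j hj => not_not.1 (hprefix j hj)
  have hxI : l[i] ∈ {v | v ∈ l} := List.getElem_mem hi
  refine ⟨l[i], hxI, hil', ⟨?_, ?_, ?_⟩, ?_⟩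
  · simpa using hnodup.concat hil'
  · rintro v hv
    rcases List.mem_append.1 hv with hv | hv
    · exact hsub hv
    · rwa [List.mem_singleton.1 hv]
  · rw [msigma_append_singleton]
    exact hmatch'.union (hmatch.mono_s6 hfresh) fun e he f hf =>
      notMem_of_mem_msigma_of_mem_freshEdges hI.1 hsub hxI hil' he hf
  · rw [msigma_append_singleton]
    exact Set.union_subset hgood (hfresh.trans hE)

/-- If `I` has an `E`-good accessibility ordering, then every `E`-good partial
accessibility ordering of a proper subset of `I` can be extended by one element. -/
theorem stmt6 [Fintype V] (G : SimpleGraph V) (A B : Set V) (hbip : IsBipartition G A B)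
    (E : Set (Sym2 V)) (I : Set V) (hI : IsMaximumIndepSet G I)
    (hex : ∃ l, IsAccessibilityOrdering G I l ∧ Msigma G l ⊆ E)
    (l' : List V) (hl' : IsPartialAccessibilityOrdering G I l')
    (hgood : Msigma G l' ⊆ E) (hproper : {v | v ∈ l'} ≠ I) :
    ∃ x ∈ I, x ∉ l' ∧ IsPartialAccessibilityOrdering G I (l' ++ [x]) ∧
      Msigma G (l' ++ [x]) ⊆ E :=
  stmt6_general G E I hI hex l' hl' hgood hproper
end

section
/- Let M be a maximum matching in a bipartite graph G such that D(M) is acyclic and both G[V^+(M)] and G[V^-(M)] are forests. If a maximum matching M' arises from M by a single edge exchange, then D(M') is acyclic. -/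
variable {V : Type*}

/-!
Away from the two exchanged edges, `D(M')` and `D(M)` have the same arcs. In the exchange
`a'b' ↦ ab'` the vertex `a'` becomes an uncovered `A`-vertex, which has no in-arcs in `D(M')`,
so a directed cycle of `D(M')` avoids `a'b'`. If it also avoids `ab'`, it is a cycle of `D(M)`.
Otherwise it uses the arc `b'a`, and the rest of it is a directed walk from `a` to `b'` in `D(M)`
avoiding the edge `ab'`. Every vertex of that walk is reachable from the uncovered vertex `a`,
so the walk lies in `G[V⁺(M)]`, where it shows that `ab'` is not a bridge: impossible in a forest.
The exchange on the `B` side is the same argument run in the reversed digraph, which is `D(M)`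
with the roles of `A` and `B` swapped and has `V⁻(M)` as its `V⁺`.
-/

open Relation

namespace Relation

variable {α : Type*} {r : α → α → Prop}

theorem TransGen.self_restrict_of_forall_not_rel {x v : α} (hx : ∀ y, ¬ r y x)
    (h : TransGen r v v) : TransGen (fun p q => r p q ∧ p ≠ x) v v := by
  have key : ∀ {u w}, TransGen r u w → u ≠ x →
      TransGen (fun p q => r p q ∧ p ≠ x) u w ∧ w ≠ x := by
    intro u w huw hu
    induction huw with
    | single h => exact ⟨.single ⟨h, hu⟩, fun hw => hx _ (hw ▸ h)⟩
    | tail _ h ih => exact ⟨ih.1.tail ⟨h, ih.2⟩, fun hw => hx _ (hw ▸ h)⟩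
  obtain ⟨y, -, hyv⟩ := TransGen.tail'_iff.mp h
  exact (key h fun hv => hx y (hv ▸ hyv)).1

theorem TransGen.self_of_sup_arc {x y v : α}
    (h : TransGen (fun p q => r p q ∨ p = x ∧ q = y) v v) :
    TransGen r v v ∨ ReflTransGen r y x := by
  have key : ∀ {u w}, TransGen (fun p q => r p q ∨ p = x ∧ q = y) u w →
      TransGen r u w ∨ ReflTransGen r u x ∧ ReflTransGen r y w := by
    intro u w huw
    induction huw with
    | single h =>
      rcases h with h | ⟨rfl, rfl⟩
      exacts [.inl (.single h), .inr ⟨.refl, .refl⟩]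
    | tail _ h ih =>
      rcases h with h | ⟨rfl, rfl⟩
      · exact ih.imp (·.tail h) fun h' => ⟨h'.1, h'.2.tail h⟩
      · exact .inr ⟨ih.elim (·.to_reflTransGen) (·.1), .refl⟩
  exact (key h).imp id fun h' => h'.2.trans h'.1

theorem ReflTransGen.exists_subtype {S : Set α} (hS : ∀ x y, r x y → x ∈ S → y ∈ S)
    {a b : α} (ha : a ∈ S) (h : ReflTransGen r a b) :
    ∃ hb : b ∈ S, ReflTransGen (fun x y : S => r x y) ⟨a, ha⟩ ⟨b, hb⟩ := by
  induction h with
  | refl => exact ⟨ha, .refl⟩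
  | tail _ hcd ih =>
    obtain ⟨hc, ih⟩ := ih
    exact ⟨hS _ _ hcd hc, ih.tail (b := ⟨_, hc⟩) hcd⟩

end Relation

namespace SimpleGraph

theorem IsAcyclic.not_reflTransGen_of_ne_edge {W : Type*} {H : SimpleGraph W} (hH : H.IsAcyclic)
    {q : W → W → Prop} {a b : W} (hq : ∀ x y, q x y → H.Adj x y ∧ s(x, y) ≠ s(a, b))
    (hab : H.Adj a b) : ¬ ReflTransGen q a b := by
  intro h
  refine isAcyclic_iff_forall_adj_isBridge.mp hH hab ?_
  rw [reachable_iff_reflTransGen]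
  exact ReflTransGen.mono (fun x y hxy => (H.deleteEdges_adj).mpr (hq x y hxy)) a b h

theorem IsAcyclic.not_reflTransGen_induce {G : SimpleGraph V} {S : Set V}
    (hS : (G.induce S).IsAcyclic) {r : V → V → Prop} {a b : V}
    (hr : ∀ x y, r x y → G.Adj x y ∧ s(x, y) ≠ s(a, b)) (hrS : ∀ x y, r x y → x ∈ S → y ∈ S)
    (ha : a ∈ S) (hab : G.Adj a b) : ¬ ReflTransGen r a b := by
  intro h
  obtain ⟨hb, h⟩ := h.exists_subtype hrS ha
  refine hS.not_reflTransGen_of_ne_edge (a := ⟨a, ha⟩) (b := ⟨b, hb⟩)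
    (fun x y hxy => ⟨(hr _ _ hxy).1, fun he => ?_⟩) hab h
  exact (hr _ _ hxy).2 (by simpa using congrArg (Sym2.map Subtype.val) he)

end SimpleGraph

section Exchange

variable {G : SimpleGraph V} {A B : Set V} {M : Set (Sym2 V)}

theorem IsBipartition.symm (h : IsBipartition G A B) : IsBipartition G B A :=
  ⟨h.1.symm, Set.union_comm A B ▸ h.2.1, fun _ _ huv => (h.2.2 huv).symm⟩

theorem dMarc_eq_swap : DMarc G B A M = Function.swap (DMarc G A B M) := by
  funext u v
  apply propext
  simp only [DMarc, Function.swap, G.adj_comm v u, Sym2.eq_swap (a := v)]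
  tauto

theorem dMAcyclic_swap : DMAcyclic G B A M ↔ DMAcyclic G A B M := by
  unfold DMAcyclic
  rw [dMarc_eq_swap]
  simp only [transGen_swap]

theorem vplus_swap : Vplus G B A M = Vminus G A B M := by
  unfold Vplus Vminus
  rw [dMarc_eq_swap]
  simp only [reflTransGen_swap]

theorem mem_matVerts_of_dMarc (hbip : IsBipartition G A B) {u w : V} (h : DMarc G A B M u w)
    (hw : w ∈ A) : w ∈ matVerts M := by
  rcases h.2 with ⟨-, hwB, -⟩ | ⟨-, -, hM⟩
  · exact absurd hwB (Set.disjoint_left.mp hbip.1 hw)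
  · exact ⟨_, hM, Sym2.mem_mk_right u w⟩

theorem DMarc.mem_vplus {u w : V} (h : DMarc G A B M u w) (hu : u ∈ Vplus G A B M) :
    w ∈ Vplus G A B M :=
  let ⟨a, ha, haM, hau⟩ := hu
  ⟨a, ha, haM, hau.tail h⟩

theorem IsMatchingSet.notMem_matVerts_diff (hM : IsMatchingSet G M) {e : Sym2 V} (he : e ∈ M)
    {v : V} (hv : v ∈ e) : v ∉ matVerts (M \ {e}) := by
  rintro ⟨f, ⟨hfM, hfe⟩, hvf⟩
  exact hM.2 e he f hfM (Ne.symm hfe) v hv hvf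

theorem DMAcyclic.edgeExchange_left (hbip : IsBipartition G A B) (hM : IsMatchingSet G M)
    (hacyc : DMAcyclic G A B M) (hfp : (G.induce (Vplus G A B M)).IsAcyclic)
    {a a' b' : V} (ha : a ∈ A) (haM : a ∉ matVerts M) (he : s(a', b') ∈ M) (hab : G.Adj a b') :
    DMAcyclic G A B (M \ {s(a', b')} ∪ {s(a, b')}) := by
  set M' := M \ {s(a', b')} ∪ {s(a, b')}
  have hAB : ∀ {x}, x ∈ A → x ∉ B := fun hx => Set.disjoint_left.mp hbip.1 hx
  have hb' : b' ∈ B := ((hbip.2.2 hab).resolve_right fun h => hAB ha h.1).2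
  have ha' : a' ∈ A := ((hbip.2.2 (G.mem_edgeSet.mp (hM.1 he))).resolve_right
    fun h => hAB h.2 hb').1
  have haa' : a ≠ a' := fun h => haM ⟨_, he, h ▸ Sym2.mem_mk_left _ _⟩
  have ha'M' : a' ∉ matVerts M' := by
    rintro ⟨f, hf | rfl, ha'f⟩
    · exact hM.notMem_matVerts_diff he (Sym2.mem_mk_left _ _) ⟨f, hf, ha'f⟩
    · rcases Sym2.mem_iff.mp ha'f with rfl | rfl
      exacts [haa' rfl, hAB ha' hb']
  have harc : ∀ u w, DMarc G A B M' u w ∧ u ≠ a' →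
      (DMarc G A B M u w ∧ s(u, w) ≠ s(a, b')) ∨ (u = b' ∧ w = a) := by
    rintro u w ⟨huw, hua'⟩
    by_cases h1 : s(u, w) = s(a, b')
    · right
      rcases huw.2 with ⟨-, -, hn⟩ | ⟨huB, -, -⟩
      · exact absurd (Or.inr h1) hn
      · rcases Sym2.eq_iff.mp h1 with ⟨rfl, -⟩ | h
        exacts [absurd huB (hAB ha), h]
    have h2 : s(u, w) ≠ s(a', b') := by
      intro h2
      rcases Sym2.eq_iff.mp h2 with ⟨rfl, -⟩ | ⟨-, rfl⟩
      · exact hua' rfl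
      · exact ha'M' (mem_matVerts_of_dMarc hbip huw ha')
    have hmem : s(u, w) ∈ M' ↔ s(u, w) ∈ M := by simp [M', h1, h2]
    exact .inl ⟨⟨huw.1, by simpa only [hmem] using huw.2⟩, h1⟩
  intro v hv
  have hv' := TransGen.mono harc v v <| hv.self_restrict_of_forall_not_rel
    fun y h => ha'M' (mem_matVerts_of_dMarc hbip h ha')
  rcases hv'.self_of_sup_arc with hcyc | hpath
  · exact hacyc v (TransGen.mono (fun _ _ h => h.1) v v hcyc)
  · exact hfp.not_reflTransGen_induce (fun _ _ h => ⟨h.1.1, h.2⟩) (fun _ _ h => h.1.mem_vplus)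
      ⟨a, ha, haM, .refl⟩ hab hpath

end Exchange

theorem stmt12_general (G : SimpleGraph V) (A B : Set V) (hbip : IsBipartition G A B)
    (M : Set (Sym2 V)) (hM : IsMaximumMatching G M) (hacyc : DMAcyclic G A B M)
    (hfp : (G.induce (Vplus G A B M)).IsAcyclic)
    (hfm : (G.induce (Vminus G A B M)).IsAcyclic)
    (M' : Set (Sym2 V)) (hx : EdgeExchange G A B M M') :
    DMAcyclic G A B M' := by
  rcases hx with ⟨a, a', b', ha, haM, he, hab, rfl⟩ | ⟨b, a', b', hb, hbM, he, hab, rfl⟩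
  · exact hacyc.edgeExchange_left hbip hM.1 hfp ha haM he hab
  · have := (dMAcyclic_swap.mpr hacyc).edgeExchange_left hbip.symm hM.1 (vplus_swap ▸ hfm)
      hb hbM (Sym2.eq_swap ▸ he) hab.symm
    rwa [dMAcyclic_swap, Sym2.eq_swap (a := b'), Sym2.eq_swap (a := b)] at this

/-- If `D(M)` is acyclic and `G[V⁺(M)]`, `G[V⁻(M)]` are forests, then a single edge
exchange yields a matching `M'` with `D(M')` acyclic. -/
theorem stmt12 [Fintype V] (G : SimpleGraph V) (A B : Set V) (hbip : IsBipartition G A B)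
    (M : Set (Sym2 V)) (hM : IsMaximumMatching G M) (hacyc : DMAcyclic G A B M)
    (hfp : (G.induce (Vplus G A B M)).IsAcyclic)
    (hfm : (G.induce (Vminus G A B M)).IsAcyclic)
    (M' : Set (Sym2 V)) (hM' : IsMaximumMatching G M') (hx : EdgeExchange G A B M M') :
    DMAcyclic G A B M' :=
  stmt12_general G A B hbip M hM hacyc hfp hfm M' hx
end

section
/- If M is a maximum matching in a bipartite graph G and M' = M Δ E(C) for an M-alternating cycle C of G, then M' is also a maximum matching, the uncovered vertex sets on each side are unchanged (A_0(M') = A_0(M), B_0(M') = B_0(M)), and V^+(M') = V^+(M), V^-(M') = V^-(M). -/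
variable {V : Type*}

/-! Every vertex of an `M`-alternating cycle `C` lies on exactly two edges of `C`, one in `M` and
one not, so `M Δ E(C)` is again a matching, covering the same vertices; it has the size of `M`
because the edges of `C` alternate in and out of `M`. In a bipartite graph, alternation also makes
the arcs of `D(M)` on `C` run the same way round `C`, so the vertices of `C` are mutually reachable
in `D(M)`. Switching reverses exactly these arcs, hence `D(M)` and `D(M Δ E(C))` have the same
reachability relation. -/

open Relation SimpleGraph

theorem List.IsChain.and {α : Type*} {R S : α → α → Prop} {l : List α} (hR : l.IsChain R)
    (hS : l.IsChain S) : l.IsChain fun a b => R a b ∧ S a b :=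
  List.isChain_iff_getElem.2 fun i hi =>
    ⟨List.isChain_iff_getElem.1 hR i hi, List.isChain_iff_getElem.1 hS i hi⟩

theorem List.countP_eq_countP_not_of_isChain_append_take_one {α : Type*} {p : α → Bool}
    {l : List α} (h : (l ++ l.take 1).IsChain (fun a b => p b = !p a)) :
    l.countP p = l.countP (fun a => !p a) := by
  have hmap : (l.rotate 1).map p = l.map (fun a => !p a) := by
    refine List.ext_getElem (by simp) fun i h₁ h₂ => ?_
    simp only [List.length_map] at h₂
    have := List.isChain_iff_getElem.1 h i (by simp; omega)
    simp only [List.getElem_map, List.getElem_rotate]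
    convert this using 2
    · rcases Nat.lt_or_ge (i + 1) l.length with hi | hi
      · simp [List.getElem_append_left, hi, Nat.mod_eq_of_lt hi]
      · have : i + 1 = l.length := by omega
        simp [List.getElem_append_right, this]
    · simp [List.getElem_append_left, h₂]
  rw [← (l.rotate_perm 1).countP_eq]
  have := congrArg (List.countP id) hmap
  rwa [List.countP_map, List.countP_map] at this

theorem List.Nodup.ncard_setOf_mem_and {α : Type*} {l : List α} (hl : l.Nodup) (p : α → Prop)
    [DecidablePred p] : {x | x ∈ l ∧ p x}.ncard = l.countP p := by
  classical
  have : {x | x ∈ l ∧ p x} = ↑(l.filter p).toFinset := by ext; simp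
  rw [this, Set.ncard_coe_finset, List.toFinset_card_of_nodup (hl.filter _),
    List.countP_eq_length_filter]

lemma SimpleGraph.Walk.reflTransGen_of_forall_darts {G : SimpleGraph V} {R : V → V → Prop}
    {u w : V} (p : G.Walk u w) (h : ∀ d ∈ p.darts, R d.fst d.snd) {x : V}
    (hx : x ∈ p.support) :
    ReflTransGen R u x ∧ ReflTransGen R x w := by
  induction p generalizing x with
  | nil => rw [Walk.mem_support_nil_iff.1 hx]; exact ⟨.refl, .refl⟩
  | @cons u u' w hadj q ih =>
    have hstep : R u u' := h _ List.mem_cons_self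
    have ih := @ih fun d hd => h d (List.mem_cons_of_mem _ hd)
    rw [Walk.support_cons, List.mem_cons] at hx
    rcases hx with rfl | hx
    · exact ⟨.refl, .head hstep (ih q.start_mem_support).2⟩
    · exact ⟨.head hstep (ih hx).1, (ih hx).2⟩

section AlternatingCycle

variable {G : SimpleGraph V} {A B : Set V} {M : Set (Sym2 V)} {v : V} {c : G.Walk v v}

lemma IsMatchingSet.eq_of_mem_of_mem (hM : IsMatchingSet G M) {e f : Sym2 V} (he : e ∈ M)
    (hf : f ∈ M) {x : V} (hxe : x ∈ e) (hxf : x ∈ f) : e = f :=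
  by_contra fun hne => hM.2 e he f hf hne x hxe hxf

lemma mem_symmDiff_edges_of_notMem_support {e : Sym2 V} {x : V} (hx : x ∉ c.support)
    (hxe : x ∈ e) : e ∈ symmDiff M {e | e ∈ c.edges} ↔ e ∈ M := by
  have he : e ∉ c.edges := fun he => hx (c.mem_support_of_mem_edges he hxe)
  simp [Set.mem_symmDiff, he]

namespace IsBipartition

lemma mem_left_iff_notMem_left (hbip : IsBipartition G A B) {u w : V} (h : G.Adj u w) :
    u ∈ A ↔ w ∉ A := by
  have hdisj := Set.disjoint_left.1 hbip.1
  rcases hbip.2.2 h with ⟨hu, hw⟩ | ⟨hu, hw⟩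
  · exact iff_of_true hu fun hw' => hdisj hw' hw
  · exact iff_of_false (fun hu' => hdisj hu' hu) (not_not.2 hw)

lemma dMarc_iff (hbip : IsBipartition G A B) {u w : V} (h : G.Adj u w) :
    DMarc G A B M u w ↔ (u ∈ A ↔ s(u, w) ∉ M) := by
  have hdisj := Set.disjoint_left.1 hbip.1
  rcases hbip.2.2 h with ⟨hu, hw⟩ | ⟨hu, hw⟩
  · have hu' : u ∉ B := hdisj hu
    simp [DMarc, h, hu, hw, hu']
  · have hu' : u ∉ A := fun hu' => hdisj hu' hu
    simp [DMarc, h, hu, hw, hu']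

lemma dMarc_swap_iff (hbip : IsBipartition G A B) {u w : V} (h : G.Adj u w) :
    DMarc G A B M w u ↔ ¬ DMarc G A B M u w := by
  rw [hbip.dMarc_iff h, hbip.dMarc_iff h.symm, hbip.mem_left_iff_notMem_left h, Sym2.eq_swap]
  tauto

lemma dMarc_iff_dMarc_of_dartAdj (hbip : IsBipartition G A B) {d d' : G.Dart}
    (hdd' : G.DartAdj d d') (halt : d.edge ∈ M ↔ d'.edge ∉ M) :
    DMarc G A B M d.fst d.snd ↔ DMarc G A B M d'.fst d'.snd := by
  obtain ⟨⟨u, w⟩, huw⟩ := d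
  obtain ⟨⟨w', z⟩, hwz⟩ := d'
  obtain rfl : w = w' := hdd'
  rw [hbip.dMarc_iff huw, hbip.dMarc_iff hwz, hbip.mem_left_iff_notMem_left huw]
  tauto

end IsBipartition

namespace IsAlternatingCycle

lemma exists_neighborSet_toSubgraph_eq_pair (hc : IsAlternatingCycle G M c) {x : V}
    (hx : x ∈ c.support) :
    ∃ a b, c.toSubgraph.neighborSet x = {a, b} ∧ (s(x, a) ∈ M ↔ s(x, b) ∉ M) := by
  have hchain : c.edges.IsChain (fun e f => e ∈ M ↔ f ∉ M) := List.IsChain.left_of_append hc.2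
  obtain ⟨i, rfl, hi⟩ := Walk.mem_support_iff_exists_getVert.mp hx
  by_cases hend : i = 0 ∨ i = c.length
  · have hv : c.getVert i = v := by rcases hend with rfl | rfl <;> simp
    have hne : c.edges ≠ [] := by simp [Walk.edges_eq_nil, hc.1.not_nil]
    have hwrap : s(c.penultimate, v) ∈ M ↔ s(v, c.snd) ∉ M := by
      have := (List.isChain_append.1 hc.2).2.2 (c.edges.getLast hne)
        (List.getLast?_eq_some_getLast hne) (c.edges.head hne)
        (by simp [List.head?_take, List.head?_eq_some_head hne])
      rwa [Walk.getLast_edges_eq_mk_penultimate_end, Walk.head_edges_eq_mk_start_snd] at this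
    refine ⟨c.penultimate, c.snd, ?_, ?_⟩
    · rw [hv, hc.1.neighborSet_toSubgraph_endpoint, Set.pair_comm]
    · rwa [hv, Sym2.eq_swap]
  · push Not at hend
    refine ⟨c.getVert (i - 1), c.getVert (i + 1),
      hc.1.neighborSet_toSubgraph_internal hend.1 (by omega), ?_⟩
    have := List.isChain_iff_getElem.1 hchain (i - 1) (by simp; omega)
    rwa [Walk.getElem_edges, Walk.getElem_edges, Nat.sub_add_cancel (by omega),
      Sym2.eq_swap] at this

lemma exists_mk_mem_edges_iff (hc : IsAlternatingCycle G M c) {x : V}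
    (hx : x ∈ c.support) :
    ∃ a b, s(x, a) ∈ M ∧ s(x, b) ∉ M ∧ ∀ y, s(x, y) ∈ c.edges ↔ y = a ∨ y = b := by
  obtain ⟨a, b, hab, halt⟩ := hc.exists_neighborSet_toSubgraph_eq_pair hx
  have hedges : ∀ y, s(x, y) ∈ c.edges ↔ y = a ∨ y = b := fun y => by
    rw [← Walk.adj_toSubgraph_iff_mem_edges, ← Subgraph.mem_neighborSet, hab]
    rfl
  by_cases ha : s(x, a) ∈ M
  · exact ⟨a, b, ha, halt.1 ha, hedges⟩
  · exact ⟨b, a, by tauto, ha, fun y => (hedges y).trans or_comm⟩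

lemma matVerts_symmDiff (hc : IsAlternatingCycle G M c) :
    matVerts (symmDiff M {e | e ∈ c.edges}) = matVerts M := by
  ext x
  by_cases hx : x ∈ c.support
  · obtain ⟨a, b, ha, hb, hedges⟩ := hc.exists_mk_mem_edges_iff hx
    have hbC : s(x, b) ∈ c.edges := (hedges b).2 (Or.inr rfl)
    exact iff_of_true ⟨s(x, b), Set.mem_symmDiff.2 (Or.inr ⟨hbC, hb⟩), Sym2.mem_mk_left x b⟩
      ⟨s(x, a), ha, Sym2.mem_mk_left x a⟩
  · exact exists_congr fun e => and_congr_left fun hxe =>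
      mem_symmDiff_edges_of_notMem_support hx hxe

lemma isMatchingSet_symmDiff (hc : IsAlternatingCycle G M c) (hM : IsMatchingSet G M) :
    IsMatchingSet G (symmDiff M {e | e ∈ c.edges}) := by
  have hsub : symmDiff M {e | e ∈ c.edges} ⊆ G.edgeSet := fun e he => by
    rcases Set.mem_symmDiff.1 he with ⟨he, -⟩ | ⟨he, -⟩
    exacts [hM.1 he, c.edges_subset_edgeSet he]
  refine ⟨hsub, fun e he f hf hne x hxe hxf => hne ?_⟩
  by_cases hx : x ∈ c.support
  · obtain ⟨a, b, ha, hb, hedges⟩ := hc.exists_mk_mem_edges_iff hx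
    have haC : s(x, a) ∈ c.edges := (hedges a).2 (Or.inl rfl)
    have hunique : ∀ g ∈ symmDiff M {e | e ∈ c.edges}, x ∈ g → g = s(x, b) := by
      intro g hg hxg
      obtain ⟨y, rfl⟩ := Sym2.mem_iff_exists.1 hxg
      rcases Set.mem_symmDiff.1 hg with ⟨hyM, hyC⟩ | ⟨hyC, hyM⟩
      · have := hM.eq_of_mem_of_mem hyM ha (Sym2.mem_mk_left x y) (Sym2.mem_mk_left x a)
        exact absurd (this ▸ haC) hyC
      · rcases (hedges y).1 hyC with rfl | rfl
        · exact absurd ha hyM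
        · rfl
    rw [hunique e he hxe, hunique f hf hxf]
  · rw [mem_symmDiff_edges_of_notMem_support hx hxe] at he
    rw [mem_symmDiff_edges_of_notMem_support hx hxf] at hf
    exact hM.eq_of_mem_of_mem he hf hxe hxf

lemma ncard_symmDiff (hc : IsAlternatingCycle G M c) (hfin : M.Finite) :
    (symmDiff M {e | e ∈ c.edges}).ncard = M.ncard := by
  classical
  have hcount : c.edges.countP (· ∈ M) = c.edges.countP (· ∉ M) := by
    simpa using List.countP_eq_countP_not_of_isChain_append_take_one
      (p := fun e => decide (e ∈ M)) (hc.2.imp fun e f hef => by simp [hef])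
  have hnodup := hc.1.edges_nodup
  have hfin' : (symmDiff M {e | e ∈ c.edges}).Finite :=
    (hfin.union c.edges.finite_toSet).subset symmDiff_le_sup
  rw [← Set.ncard_inter_add_ncard_sdiff_eq_ncard M {e | e ∈ c.edges} hfin,
    ← Set.ncard_inter_add_ncard_sdiff_eq_ncard _ {e | e ∈ c.edges} hfin']
  congr 1
  · have h₁ : symmDiff M {e | e ∈ c.edges} ∩ {e | e ∈ c.edges} =
        {e | e ∈ c.edges ∧ e ∉ M} := by
      ext e; simp [Set.mem_symmDiff]; tauto
    have h₂ : M ∩ {e | e ∈ c.edges} = {e | e ∈ c.edges ∧ e ∈ M} := by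
      ext e; simp [and_comm]
    rw [h₁, h₂, hnodup.ncard_setOf_mem_and, hnodup.ncard_setOf_mem_and, hcount]
  · congr 1; ext e; simp

lemma dMarc_darts (hbip : IsBipartition G A B) (hc : IsAlternatingCycle G M c) :
    (∀ d ∈ c.darts, DMarc G A B M d.fst d.snd) ∨
      (∀ d ∈ c.darts, DMarc G A B M d.snd d.fst) := by
  have hchain : c.darts.IsChain fun d d' =>
      (DMarc G A B M d.fst d.snd ↔ DMarc G A B M d'.fst d'.snd) :=
    (c.isChain_dartAdj_darts.and ((List.isChain_map _).1 (hc.2.left_of_append))).imp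
      fun d d' h => hbip.dMarc_iff_dMarc_of_dartAdj h.1 h.2
  by_cases hfirst :
      ∀ hne : c.darts ≠ [], DMarc G A B M (c.darts.head hne).fst (c.darts.head hne).snd
  · exact .inl (hchain.induction _ _ (fun d d' h => h.1) hfirst)
  · push Not at hfirst
    obtain ⟨hne, hfirst⟩ := hfirst
    refine .inr (hchain.induction _ _ (fun d d' h hd => ?_) fun _ => ?_)
    · rw [hbip.dMarc_swap_iff d'.adj, ← h, ← hbip.dMarc_swap_iff d.adj]
      exact hd
    · exact (hbip.dMarc_swap_iff (c.darts.head hne).adj).2 hfirst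

lemma reflTransGen_dMarc (hbip : IsBipartition G A B) (hc : IsAlternatingCycle G M c) {x y : V}
    (hx : x ∈ c.support) (hy : y ∈ c.support) : ReflTransGen (DMarc G A B M) x y := by
  rcases hc.dMarc_darts hbip with h | h
  · exact (c.reflTransGen_of_forall_darts h hx).2.trans (c.reflTransGen_of_forall_darts h hy).1
  · rw [← reflTransGen_swap]
    exact (c.reflTransGen_of_forall_darts (R := Function.swap (DMarc G A B M)) h hy).2.trans
      (c.reflTransGen_of_forall_darts (R := Function.swap (DMarc G A B M)) h hx).1

lemma symmDiff_edges (hc : IsAlternatingCycle G M c) :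
    IsAlternatingCycle G (symmDiff M {e | e ∈ c.edges}) c := by
  refine ⟨hc.1, hc.2.imp_of_mem_imp fun e f he hf hef => ?_⟩
  have hmem : ∀ g ∈ c.edges ++ c.edges.take 1,
      (g ∈ symmDiff M {e | e ∈ c.edges} ↔ g ∉ M) :=
    fun g hg => by
      have : g ∈ c.edges := (List.mem_append.1 hg).elim id List.mem_of_mem_take
      simp [Set.mem_symmDiff, this]
  rw [hmem e he, hmem f hf]
  tauto

lemma reflTransGen_dMarc_symmDiff_le (hbip : IsBipartition G A B)
    (hc : IsAlternatingCycle G M c) :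
    ReflTransGen (DMarc G A B (symmDiff M {e | e ∈ c.edges})) ≤
      ReflTransGen (DMarc G A B M) := by
  refine reflTransGen_closed fun a b hab => ?_
  by_cases habC : s(a, b) ∈ c.edges
  · exact hc.reflTransGen_dMarc hbip (c.fst_mem_support_of_mem_edges habC)
      (c.snd_mem_support_of_mem_edges habC)
  · have hmem : s(a, b) ∈ symmDiff M {e | e ∈ c.edges} ↔ s(a, b) ∈ M := by
      simp [Set.mem_symmDiff, habC]
    exact .single (by simpa only [DMarc, hmem] using hab)

lemma reflTransGen_dMarc_symmDiff (hbip : IsBipartition G A B)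
    (hc : IsAlternatingCycle G M c) :
    ReflTransGen (DMarc G A B (symmDiff M {e | e ∈ c.edges})) =
      ReflTransGen (DMarc G A B M) := by
  refine le_antisymm (hc.reflTransGen_dMarc_symmDiff_le hbip) ?_
  simpa only [symmDiff_symmDiff_cancel_right] using
    hc.symmDiff_edges.reflTransGen_dMarc_symmDiff_le hbip

end IsAlternatingCycle

end AlternatingCycle

/-- Switching `M` along an `M`-alternating cycle `C` gives a maximum matching with
the same uncovered vertices on each side and the same `V⁺` and `V⁻`. -/
theorem stmt14 [Fintype V] (G : SimpleGraph V) (A B : Set V) (hbip : IsBipartition G A B)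
    (M : Set (Sym2 V)) (hM : IsMaximumMatching G M)
    (v : V) (c : G.Walk v v) (hc : IsAlternatingCycle G M c)
    (M' : Set (Sym2 V)) (hM'def : M' = symmDiff M {e | e ∈ c.edges}) :
    IsMaximumMatching G M' ∧
    A \ matVerts M' = A \ matVerts M ∧ B \ matVerts M' = B \ matVerts M ∧
    Vplus G A B M' = Vplus G A B M ∧ Vminus G A B M' = Vminus G A B M := by
  subst hM'def
  have hverts := hc.matVerts_symmDiff
  have hreach := hc.reflTransGen_dMarc_symmDiff hbip
  refine ⟨⟨hc.isMatchingSet_symmDiff hM.1, ?_⟩, by rw [hverts], by rw [hverts], ?_, ?_⟩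
  · rw [hc.ncard_symmDiff M.toFinite]
    exact hM.2
  · simp only [Vplus, hverts, hreach]
  · simp only [Vminus, hverts, hreach]
end
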